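/- arXiv:1502.06934 — 3 statements merged into one kernel-verified Lean document; each statement's English description precedes it below -/
import Mathlib

section
/- Let X : [c̲, c̄] → ℝ be non-negative, non-increasing and integrable, and define the payment T(c) = c·X(c) + ∫_c^{c̄} X(z) dz. Then for all c, ĉ ∈ [c̲, c̄]: (a) T(c) - c·X(c) ≥ T(ĉ) - c·X(ĉ) (truthfulness), and (b) T(c) - c·X(c) ≥ 0 (individual rationality). -/
/-! Writing `U(ĉ) = T(ĉ) - c·X(ĉ) = (ĉ - c)·X(ĉ) + ∫_ĉ^{c̄} X`, truthfulness reduces to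
`(ĉ - c)·X(ĉ) ≤ ∫_c^ĉ X`, which holds on either side of `c` because `X` is non-increasing:
it lies above `X(ĉ)` to the left of `ĉ` and below it to the right. Individual rationality is
`U(c) = ∫_c^{c̄} X ≥ 0`. -/

open intervalIntegral

theorem AntitoneOn.sub_mul_le_intervalIntegral {f : ℝ → ℝ} {a b : ℝ}
    (hf : AntitoneOn f (Set.uIcc a b)) (hint : IntervalIntegrable f MeasureTheory.volume a b) :
    (b - a) * f b ≤ ∫ x in a..b, f x := by
  rcases le_total a b with hab | hba
  · have hle : ∀ x ∈ Set.Icc a b, f b ≤ f x := fun x hx =>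
      hf (Set.Icc_subset_uIcc hx) Set.right_mem_uIcc hx.2
    simpa [mul_comm] using integral_mono_on hab intervalIntegrable_const hint hle
  · have hle : ∀ x ∈ Set.Icc b a, f x ≤ f b := fun x hx =>
      hf Set.right_mem_uIcc (Set.Icc_subset_uIcc' hx) hx.1
    have h := integral_mono_on hba hint.symm intervalIntegrable_const hle
    rw [integral_const, smul_eq_mul] at h
    rw [integral_symm]
    linarith

theorem stmt5_general (clo chi : ℝ) (X T : ℝ → ℝ)
    (hXnonneg : ∀ c ∈ Set.Icc clo chi, 0 ≤ X c)
    (hXmono : AntitoneOn X (Set.Icc clo chi))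
    (hXint : IntervalIntegrable X MeasureTheory.volume clo chi)
    (hT : ∀ c ∈ Set.Icc clo chi, T c = c * X c + ∫ z in c..chi, X z) :
    ∀ c ∈ Set.Icc clo chi, ∀ chat ∈ Set.Icc clo chi,
      (T chat - c * X chat ≤ T c - c * X c) ∧ (0 ≤ T c - c * X c) := by
  intro c hc chat hchat
  have hchi : chi ∈ Set.Icc clo chi := ⟨hc.1.trans hc.2, le_rfl⟩
  have hsub : ∀ a ∈ Set.Icc clo chi, ∀ b ∈ Set.Icc clo chi,
      Set.uIcc a b ⊆ Set.Icc clo chi :=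
    fun a ha b hb => Set.uIcc_subset_Icc ha hb
  have hint : ∀ a ∈ Set.Icc clo chi, ∀ b ∈ Set.Icc clo chi,
      IntervalIntegrable X MeasureTheory.volume a b := fun a ha b hb =>
    hXint.mono_set ((hsub a ha b hb).trans Set.Icc_subset_uIcc)
  have hrent : ∀ d ∈ Set.Icc clo chi, T d - c * X d = (d - c) * X d + ∫ z in d..chi, X z :=
    fun d hd => by rw [hT d hd]; ring
  constructor
  · calc T chat - c * X chat = (chat - c) * X chat + ∫ z in chat..chi, X z := hrent chat hchat
      _ ≤ (∫ z in c..chat, X z) + ∫ z in chat..chi, X z := by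
        gcongr
        exact (hXmono.mono (hsub c hc chat hchat)).sub_mul_le_intervalIntegral
          (hint c hc chat hchat)
      _ = ∫ z in c..chi, X z :=
        integral_add_adjacent_intervals (hint c hc chat hchat) (hint chat hchat chi hchi)
      _ = T c - c * X c := by rw [hrent c hc, sub_self, zero_mul, zero_add]
  · rw [hrent c hc, sub_self, zero_mul, zero_add]
    exact integral_nonneg hc.2 fun z hz => hXnonneg z ⟨hc.1.trans hz.1, hz.2⟩

/-- For a non-negative, non-increasing, integrable allocation `X` and the
Myerson payment `T(c) = c·X(c) + ∫_c^{c̄} X(z) dz`, truthfulness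
`T(c) - c·X(c) ≥ T(ĉ) - c·X(ĉ)` and individual rationality `T(c) - c·X(c) ≥ 0` hold. -/
theorem stmt5 (clo chi : ℝ) (hcc : clo ≤ chi) (X T : ℝ → ℝ)
    (hXnonneg : ∀ c ∈ Set.Icc clo chi, 0 ≤ X c)
    (hXmono : AntitoneOn X (Set.Icc clo chi))
    (hXint : IntervalIntegrable X MeasureTheory.volume clo chi)
    (hT : ∀ c ∈ Set.Icc clo chi, T c = c * X c + ∫ z in c..chi, X z) :
    ∀ c ∈ Set.Icc clo chi, ∀ chat ∈ Set.Icc clo chi,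
      (T chat - c * X chat ≤ T c - c * X c) ∧ (0 ≤ T c - c * X c) :=
  stmt5_general clo chi X T hXnonneg hXmono hXint hT
end

section
/- In the greedy allocation (allocate min(remaining budget, capacity) units to agents in non-increasing order of G, skipping agents with G < 0), the allocation to agent i is non-decreasing in his own capacity kᵢ: if kᵢ' ≥ kᵢ with all other parameters fixed, then xᵢ(kᵢ') ≥ xᵢ(kᵢ). -/
/-! The share of agent `i₀` is `min (k i₀) (L - s)`, where `s` is the amount taken by the agents
before him. Those agents see only their own capacities and the amounts taken before them, so `s`
is the same for `k` and `k'`, and the share of `i₀` is monotone in `k i₀`. -/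

open Finset

theorem eqOn_Iio_of_sum_Iio_recursion {ι : Type*} [LinearOrder ι] [LocallyFiniteOrderBot ι]
    [WellFoundedLT ι] {M : Type*} [AddCommMonoid M] {F F' : ι → M → M} {x x' : ι → M} {i₀ : ι}
    (hx : ∀ i, x i = F i (∑ j ∈ Iio i, x j)) (hx' : ∀ i, x' i = F' i (∑ j ∈ Iio i, x' j))
    (hF : ∀ j < i₀, F j = F' j) :
    ∀ j < i₀, x j = x' j := by
  intro j
  induction j using WellFoundedLT.induction with
  | ind j ih =>
    intro hj
    have hsum : ∑ a ∈ Iio j, x a = ∑ a ∈ Iio j, x' a :=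
      sum_congr rfl fun a ha => ih a (mem_Iio.mp ha) ((mem_Iio.mp ha).trans hj)
    rw [hx j, hx' j, hF j hj, hsum]

theorem sum_Iio_eq_of_sum_Iio_recursion {ι : Type*} [LinearOrder ι] [LocallyFiniteOrderBot ι]
    [WellFoundedLT ι] {M : Type*} [AddCommMonoid M] {F F' : ι → M → M} {x x' : ι → M} {i₀ : ι}
    (hx : ∀ i, x i = F i (∑ j ∈ Iio i, x j)) (hx' : ∀ i, x' i = F' i (∑ j ∈ Iio i, x' j))
    (hF : ∀ j < i₀, F j = F' j) :
    ∑ j ∈ Iio i₀, x j = ∑ j ∈ Iio i₀, x' j :=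
  sum_congr rfl fun j hj => eqOn_Iio_of_sum_Iio_recursion hx hx' hF j (mem_Iio.mp hj)

theorem stmt14_general (n : ℕ) (G : Fin n → ℝ) (L : ℕ)
    (k k' : Fin n → ℕ) (i₀ : Fin n)
    (hki : k i₀ ≤ k' i₀) (hk : ∀ j, j ≠ i₀ → k' j = k j)
    (x x' : Fin n → ℕ)
    (hx : ∀ i : Fin n, x i =
      if 0 ≤ G i then min (k i) (L - ∑ j ∈ Finset.Iio i, x j) else 0)
    (hx' : ∀ i : Fin n, x' i =
      if 0 ≤ G i then min (k' i) (L - ∑ j ∈ Finset.Iio i, x' j) else 0) :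
    x i₀ ≤ x' i₀ := by
  have hsum : ∑ j ∈ Iio i₀, x j = ∑ j ∈ Iio i₀, x' j :=
    sum_Iio_eq_of_sum_Iio_recursion
      (F := fun i s => if 0 ≤ G i then min (k i) (L - s) else 0)
      (F' := fun i s => if 0 ≤ G i then min (k' i) (L - s) else 0) hx hx'
      fun j hj => by simp only [hk j hj.ne]
  rw [hx i₀, hx' i₀, hsum]
  split_ifs
  · exact min_le_min_right _ hki
  · exact le_rfl

/-- In the greedy capacitated allocation (agents processed in non-increasing
order of `G`, each agent with `G i ≥ 0` receiving `min(capacity, remaining budget)`), the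
allocation to an agent is non-decreasing in his own capacity: if `k' i₀ ≥ k i₀` and
`k' j = k j` for `j ≠ i₀`, then `x' i₀ ≥ x i₀`. -/
theorem stmt14 (n : ℕ) (G : Fin n → ℝ) (L : ℕ)
    (hG : ∀ i j : Fin n, i ≤ j → G j ≤ G i)
    (k k' : Fin n → ℕ) (i₀ : Fin n)
    (hki : k i₀ ≤ k' i₀) (hk : ∀ j, j ≠ i₀ → k' j = k j)
    (x x' : Fin n → ℕ)
    (hx : ∀ i : Fin n, x i =
      if 0 ≤ G i then min (k i) (L - ∑ j ∈ Finset.Iio i, x j) else 0)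
    (hx' : ∀ i : Fin n, x' i =
      if 0 ≤ G i then min (k' i) (L - ∑ j ∈ Finset.Iio i, x' j) else 0) :
    x i₀ ≤ x' i₀ :=
  stmt14_general n G L k k' i₀ hki hk x x' hx hx'
end

section
/- In the greedy allocation with agent i's score Gᵢ(cᵢ) strictly decreasing in his reported cost cᵢ (others fixed), the number of units xᵢ allocated to agent i is non-increasing in cᵢ: if cᵢ ≤ cᵢ' then xᵢ(cᵢ) ≥ xᵢ(cᵢ'). -/
open Function

/-- Greedy capacitated allocation to agent `i` for score vector `G`: agents are processed
in non-increasing order of score (ties broken by index), each receiving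
`min(capacity, remaining budget)` while the score is nonnegative. An agent `j` has
priority over `i` if `G j > G i`, or `G j = G i` and `j < i`. -/
noncomputable def greedyAlloc (n : ℕ) (G : Fin n → ℝ) (k : Fin n → ℕ) (L : ℕ) (i : Fin n) : ℕ :=
  if 0 ≤ G i then
    min (k i)
      (L - ∑ j ∈ Finset.univ.filter
        (fun j => 0 ≤ G j ∧ (G i < G j ∨ (G j = G i ∧ j < i))), k j)
  else 0

lemma priority_of_le {x a b : ℝ} {p : Prop} (hab : a ≤ b) (h : b < x ∨ (x = b ∧ p)) :
    a < x ∨ (x = a ∧ p) := by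
  rcases h with hx | ⟨rfl, hp⟩
  · exact .inl (hab.trans_lt hx)
  · rcases hab.lt_or_eq with hlt | rfl
    · exact .inl hlt
    · exact .inr ⟨rfl, hp⟩

/-- Raising an agent's own score can only remove agents from those ranked ahead of it. -/
lemma greedyAlloc_update_le_update {n : ℕ} (G : Fin n → ℝ) (k : Fin n → ℕ) (L : ℕ)
    (i : Fin n) {a b : ℝ} (hab : a ≤ b) :
    greedyAlloc n (update G i a) k L i ≤ greedyAlloc n (update G i b) k L i := by
  unfold greedyAlloc
  rw [update_self, update_self]
  by_cases ha : 0 ≤ a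
  · rw [if_pos ha, if_pos (ha.trans hab)]
    refine min_le_min_left _ (tsub_le_tsub_left (Finset.sum_le_sum_of_subset ?_) _)
    intro j hj
    simp only [Finset.mem_filter, Finset.mem_univ, true_and] at hj ⊢
    have hji : j ≠ i := by
      rintro rfl
      rcases hj.2 with h | ⟨_, h⟩ <;> simp at h
    rw [update_of_ne hji] at hj ⊢
    exact ⟨hj.1, priority_of_le hab hj.2⟩
  · rw [if_neg ha]
    exact Nat.zero_le _

/-- In the greedy allocation with agent `i₀`'s score `g(c)` strictly
decreasing in his reported cost `c` (all other scores fixed), the number of units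
allocated to `i₀` is non-increasing in `c`. -/
theorem stmt15 (n : ℕ) (G : Fin n → ℝ) (k : Fin n → ℕ) (L : ℕ) (i₀ : Fin n)
    (g : ℝ → ℝ) (hg : StrictAnti g) :
    ∀ c c' : ℝ, c ≤ c' →
      greedyAlloc n (Function.update G i₀ (g c')) k L i₀ ≤
        greedyAlloc n (Function.update G i₀ (g c)) k L i₀ :=
  fun _ _ hcc => greedyAlloc_update_le_update G k L i₀ (hg.antitone hcc)
end
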